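/- Counterexample to Jean's statement of the Fundamental Theorem: for d = 1/12 and (m, n) = (1, 3), the unique integers u, v with 0 ≤ u < 1, 0 ≤ v < 3 and |1·v - 3·u| = 1 are u = 0, v = 1; d = 1/12 < 1/2 lies in the closed interval [u/1, v/3] = [0, 1/3]; yet the pair (1, 3) is neither opposed (d_1 = 1/12 and d_3 = 1/4 have the same sign) nor generating (Δ_{13}(1/12) = [3/12]·1 - [1/12]·3 = 0). -/

import Mathlib

/-- Counterexample to Jean's Fundamental Theorem: for d = 1/12, (m,n) = (1,3),
the unique box solution is u = 0, v = 1, and d ∈ [0, 1/3] with d < 1/2;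
yet (1,3) is neither opposed nor generating (Δ_{13}(1/12) = 0). -/
theorem jean_counterexample :
    (∀ u v : ℤ, 0 ≤ u → u < 1 → 0 ≤ v → v < 3 → |1 * v - 3 * u| = 1 →
        u = 0 ∧ v = 1) ∧
    ((0 : ℝ) / 1 ≤ 1 / 12 ∧ (1 : ℝ) / 12 ≤ 1 / 3 ∧ (1 : ℝ) / 12 < 1 / 2) ∧
    ¬ (((1 : ℝ) / 12 - round ((1 : ℝ) / 12)) *
        (3 * ((1 : ℝ) / 12) - round (3 * ((1 : ℝ) / 12))) < 0) ∧
    round (3 * ((1 : ℝ) / 12)) * 1 - round ((1 : ℝ) / 12) * 3 = 0 := by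
  have round_d : round ((1 : ℝ) / 12) = 0 := round_eq_zero_iff.mpr ⟨by norm_num, by norm_num⟩
  have round_3d : round (3 * ((1 : ℝ) / 12)) = 0 :=
    round_eq_zero_iff.mpr ⟨by norm_num, by norm_num⟩
  refine ⟨?box_solution, by norm_num, ?not_opposed, ?not_generating⟩
  case box_solution =>
    intro u v hu hu1 hv _ hsol
    obtain rfl : u = 0 := by omega
    rw [abs_eq zero_le_one] at hsol
    omega
  case not_opposed =>
    rw [round_d, round_3d, not_lt]
    norm_num
  case not_generating =>
    rw [round_d, round_3d]
    ring
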